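/- arXiv:2007.06305 — 3 statements merged into one kernel-verified Lean document; each statement's English description precedes it below -/
import Mathlib

section
/- Let X be an n×n complex positive semidefinite matrix with trace equal to 1. Then the traces Tr(X^2) and Tr(X^3) are real and satisfy (Tr(X^2))^2 ≤ Tr(X^3). -/
open scoped ComplexOrder

/-!
Diagonalising `X` by a unitary, `Tr(X^k) = ∑ λᵢ^k` for its real eigenvalues `λᵢ ≥ 0`, which sum
to `1`. Cauchy–Schwarz for the vectors `(√λᵢ)` and `(λᵢ^{3/2})` gives
`(∑ λᵢ²)² ≤ (∑ λᵢ)(∑ λᵢ³) = ∑ λᵢ³`.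
-/

namespace Matrix.IsHermitian

variable {𝕜 n : Type*} [RCLike 𝕜] [Fintype n] [DecidableEq n] {A : Matrix n n 𝕜}

theorem trace_pow (hA : A.IsHermitian) (k : ℕ) :
    (A ^ k).trace = ((∑ i, hA.eigenvalues i ^ k : ℝ) : 𝕜) := by
  conv_lhs => rw [hA.spectral_theorem, ← map_pow, Unitary.conjStarAlgAut_apply,
    trace_mul_cycle, Unitary.coe_star_mul_self, one_mul, diagonal_pow, trace_diagonal]
  simp

end Matrix.IsHermitian

theorem Finset.sum_sq_sq_le_sum_mul_sum_pow_three {ι : Type*} (s : Finset ι) {x : ι → ℝ}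
    (hx : ∀ i ∈ s, 0 ≤ x i) : (∑ i ∈ s, x i ^ 2) ^ 2 ≤ (∑ i ∈ s, x i) * ∑ i ∈ s, x i ^ 3 :=
  s.sum_sq_le_sum_mul_sum_of_sq_le_mul hx (fun i hi => pow_nonneg (hx i hi) 3)
    fun i _ => le_of_eq (by ring)

theorem p3_ppt_condition_general {n : Type*} [Fintype n] [DecidableEq n]
    (X : Matrix n n ℂ) (hX : X.PosSemidef) (htr : X.trace = 1) :
    ∃ t₂ t₃ : ℝ, (X ^ 2).trace = (t₂ : ℂ) ∧ (X ^ 3).trace = (t₃ : ℂ) ∧ t₂ ^ 2 ≤ t₃ := by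
  have hsum : ∑ i, hX.1.eigenvalues i = 1 := by
    have h := hX.1.trace_pow 1
    simp only [pow_one, htr] at h
    exact Complex.ofReal_eq_one.mp h.symm
  refine ⟨∑ i, hX.1.eigenvalues i ^ 2, ∑ i, hX.1.eigenvalues i ^ 3,
    hX.1.trace_pow 2, hX.1.trace_pow 3, ?_⟩
  simpa only [hsum, one_mul] using
    Finset.univ.sum_sq_sq_le_sum_mul_sum_pow_three fun i _ => hX.eigenvalues_nonneg i

/-- **Proposition 1 (the p3-PPT condition).**
For every positive semidefinite complex matrix `X` with unit trace,
the traces `Tr(X^2)` and `Tr(X^3)` are real and satisfy `(Tr(X^2))^2 ≤ Tr(X^3)`. -/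
theorem p3_ppt_condition {n : Type*} [Fintype n] [Nonempty n] [DecidableEq n]
    (X : Matrix n n ℂ) (hX : X.PosSemidef) (htr : X.trace = 1) :
    ∃ t₂ t₃ : ℝ, (X ^ 2).trace = (t₂ : ℂ) ∧ (X ^ 3).trace = (t₃ : ℂ) ∧ t₂ ^ 2 ≤ t₃ :=
  p3_ppt_condition_general X hX htr
end

section
/- Let X be an n×n complex positive semidefinite matrix with trace equal to 1, and let p be a natural number with p ≥ 3. Then (Tr(X^{p-1}))^{p-1} ≤ (Tr(X^p))^{p-2}, where both traces are real and nonnegative. -/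
open scoped ComplexOrder

lemma trace_pow_eq_sum_eigenvalues {n : Type*} [Fintype n] [DecidableEq n]
    (X : Matrix n n ℂ) (hX : X.IsHermitian) (k : ℕ) :
    (X ^ k).trace = ((∑ i, hX.eigenvalues i ^ k : ℝ) : ℂ) := by
  set U : Matrix n n ℂ := (Matrix.IsHermitian.eigenvectorUnitary hX : Matrix n n ℂ) with hU
  have hUU : U * star U = 1 := by simp [hU]
  have hUU' : star U * U = 1 := by simp [hU]
  set D : Matrix n n ℂ := Matrix.diagonal (RCLike.ofReal ∘ hX.eigenvalues) with hD
  have hspec : X = U * D * star U := hX.spectral_theorem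
  have hpow : X ^ k = U * D ^ k * star U := by
    induction k with
    | zero => simpa using hUU.symm
    | succ m ih =>
        rw [pow_succ, ih, hspec]
        have h1 : U * D ^ m * star U * (U * D * star U)
            = U * D ^ m * (star U * U) * (D * star U) := by
          simp only [Matrix.mul_assoc]
        rw [h1, hUU']
        simp only [Matrix.mul_one, Matrix.mul_assoc, pow_succ]
  rw [hpow, Matrix.trace_mul_cycle, hUU', Matrix.one_mul, hD,
    Matrix.diagonal_pow, Matrix.trace_diagonal]
  push_cast
  simp [Function.comp]

/-- **Generalized higher-moment PPT condition (Eq. (9) of the SM).**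
For every positive semidefinite complex matrix `X` with unit trace and every `p ≥ 3`,
`(Tr(X^{p-1}))^{p-1} ≤ (Tr(X^p))^{p-2}`, both traces being real and nonnegative. -/
theorem generalized_ppt_condition {n : Type*} [Fintype n] [Nonempty n] [DecidableEq n]
    (X : Matrix n n ℂ) (hX : X.PosSemidef) (htr : X.trace = 1)
    (p : ℕ) (hp : 3 ≤ p) :
    ∃ a b : ℝ, 0 ≤ a ∧ 0 ≤ b ∧
      (X ^ (p - 1)).trace = (a : ℂ) ∧ (X ^ p).trace = (b : ℂ) ∧
      a ^ (p - 1) ≤ b ^ (p - 2) := by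
  set lam := hX.1.eigenvalues with hlam
  have hnn : ∀ i, 0 ≤ lam i := hX.eigenvalues_nonneg
  have hsum1 : ∑ i, lam i = 1 := by
    have h1 := trace_pow_eq_sum_eigenvalues X hX.1 1
    rw [pow_one, htr] at h1
    have := Complex.ofReal_injective h1.symm
    simpa using this
  set A : ℝ := ∑ i, lam i ^ (p - 1) with hA
  set B : ℝ := ∑ i, lam i ^ p with hB
  have hA0 : 0 ≤ A := Finset.sum_nonneg fun i _ => pow_nonneg (hnn i) _
  have hB0 : 0 ≤ B := Finset.sum_nonneg fun i _ => pow_nonneg (hnn i) _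
  refine ⟨A, B, hA0, hB0, trace_pow_eq_sum_eigenvalues X hX.1 (p - 1),
    trace_pow_eq_sum_eigenvalues X hX.1 p, ?_⟩
  -- Jensen with weights lam and convex function t ↦ t ^ q, q = (p-1)/(p-2) ≥ 1
  set q : ℝ := ((p : ℝ) - 1) / ((p : ℝ) - 2) with hq
  have hp3 : (3 : ℝ) ≤ (p : ℝ) := by exact_mod_cast hp
  have hp2pos : (0 : ℝ) < (p : ℝ) - 2 := by linarith
  have hq1 : 1 ≤ q := by
    rw [hq, le_div_iff₀ hp2pos]; linarith
  have key := Real.rpow_arith_mean_le_arith_mean_rpow Finset.univ lam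
    (fun i => lam i ^ (p - 2)) (fun i _ => hnn i) hsum1
    (fun i _ => pow_nonneg (hnn i) _) hq1
  -- LHS: ∑ lam i * lam i ^ (p-2) = A
  have hL : ∑ i, lam i * lam i ^ (p - 2) = A := by
    refine Finset.sum_congr rfl fun i _ => ?_
    rw [← pow_succ']
    congr 1
    omega
  -- RHS: ∑ lam i * (lam i ^ (p-2)) ^ q = B
  have hR : ∑ i, lam i * (lam i ^ (p - 2) : ℝ) ^ q = B := by
    refine Finset.sum_congr rfl fun i _ => ?_
    rw [← Real.rpow_natCast (lam i) (p - 2), ← Real.rpow_mul (hnn i)]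
    have h1 : ((p - 2 : ℕ) : ℝ) * q = (p : ℝ) - 1 := by
      have : ((p - 2 : ℕ) : ℝ) = (p : ℝ) - 2 := by
        have : (2 : ℕ) ≤ p := by omega
        push_cast [Nat.cast_sub this]; ring
      rw [this, hq]
      field_simp
    rw [h1]
    rw [show (p : ℝ) - 1 = ((p - 1 : ℕ) : ℝ) by
      have : (1 : ℕ) ≤ p := by omega
      push_cast [Nat.cast_sub this]; ring]
    rw [Real.rpow_natCast, ← pow_succ']
    congr 1
    omega
  rw [hL, hR] at key
  -- key : A ^ q ≤ B, now raise to power (p-2)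
  have h2 : (A ^ q) ^ (p - 2 : ℕ) ≤ B ^ (p - 2 : ℕ) :=
    pow_le_pow_left₀ (Real.rpow_nonneg hA0 q) key _
  have h3 : (A ^ q) ^ (p - 2 : ℕ) = A ^ (p - 1 : ℕ) := by
    rw [← Real.rpow_natCast (A ^ q) (p - 2), ← Real.rpow_mul hA0]
    have hc2 : ((p - 2 : ℕ) : ℝ) = (p : ℝ) - 2 := by
      have : (2 : ℕ) ≤ p := by omega
      push_cast [Nat.cast_sub this]; ring
    have hc1 : ((p - 1 : ℕ) : ℝ) = (p : ℝ) - 1 := by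
      have : (1 : ℕ) ≤ p := by omega
      push_cast [Nat.cast_sub this]; ring
    rw [hc2, hq, div_mul_cancel₀ _ (ne_of_gt hp2pos), ← hc1, Real.rpow_natCast]
  rw [h3] at h2
  exact h2
end

section
/- Fix an integer d ≥ 2, α ∈ [0,1], and a natural number n ≥ 1, and let ρ_W be the Werner state with parameter α on ℂ^d ⊗ ℂ^d. Then Tr[(ρ_W^{T_A})^n] = λ₀^n + (d²−1)·λ₁^n, where λ₀ = (2α−1)/d and λ₁ = (d+1−2α)/(d(d²−1)), the trace being a real number. -/
/-- Partial transpose on the `A` factor: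
`(X^{T_A})_{(a,b),(a',b')} = X_{(a',b),(a,b')}`. -/
def partialTransposeA {A B : Type*} (X : Matrix (A × B) (A × B) ℂ) :
    Matrix (A × B) (A × B) ℂ :=
  fun p q => X (q.1, p.2) (p.1, q.2)

/-- The swap matrix on `ℂ^d ⊗ ℂ^d`: `S_{(i,j),(k,l)} = δ_{i,l} δ_{j,k}`. -/
def swapMatrix (d : ℕ) : Matrix (Fin d × Fin d) (Fin d × Fin d) ℂ :=
  fun p q => if p.1 = q.2 ∧ p.2 = q.1 then 1 else 0

/-- The projector `Π₊ = (I + S)/2` onto the symmetric subspace. -/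
noncomputable def symProj (d : ℕ) : Matrix (Fin d × Fin d) (Fin d × Fin d) ℂ :=
  (2 : ℂ)⁻¹ • (1 + swapMatrix d)

/-- The projector `Π₋ = (I − S)/2` onto the antisymmetric subspace. -/
noncomputable def antisymProj (d : ℕ) : Matrix (Fin d × Fin d) (Fin d × Fin d) ℂ :=
  (2 : ℂ)⁻¹ • (1 - swapMatrix d)

/-- The Werner state with parameter `α`:
`ρ_W = α·Π₊/(d(d+1)/2) + (1−α)·Π₋/(d(d−1)/2)`. -/
noncomputable def wernerState (d : ℕ) (α : ℝ) :
    Matrix (Fin d × Fin d) (Fin d × Fin d) ℂ :=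
  ((α : ℂ) / ((d : ℂ) * ((d : ℂ) + 1) / 2)) • symProj d +
    (((1 - α : ℝ) : ℂ) / ((d : ℂ) * ((d : ℂ) - 1) / 2)) • antisymProj d

/-- The projector onto the maximally entangled state:
`(Δ₀)_{(i,j),(k,l)} = δ_{i,j} δ_{k,l} / d`. -/
noncomputable def maxEntProj (d : ℕ) : Matrix (Fin d × Fin d) (Fin d × Fin d) ℂ :=
  fun p q => (if p.1 = p.2 ∧ q.1 = q.2 then 1 else 0) / (d : ℂ)

/-!
Partial transposition is linear, fixes the identity and sends the swap `S` to `d · Δ₀`, where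
`Δ₀` is the projector onto the maximally entangled state. Hence `ρ_W^{T_A} = λ₀ Δ₀ + λ₁ (1 - Δ₀)`,
a spectral decomposition along the complementary idempotents `Δ₀` and `1 - Δ₀`, whose traces are
`1` and `d² - 1`. Powers act on the coefficients, giving `λ₀ⁿ + (d² - 1) λ₁ⁿ`.
-/

theorem IsIdempotentElem.smul_add_smul_one_sub_pow {R M : Type*} [CommSemiring R] [Ring M]
    [Algebra R M] {e : M} (he : IsIdempotentElem e) (x y : R) (n : ℕ) :
    (x • e + y • (1 - e)) ^ n = x ^ n • e + y ^ n • (1 - e) := by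
  induction n with
  | zero => simp
  | succ n ih =>
    rw [pow_succ, ih]
    simp only [add_mul, mul_add, smul_mul_smul, he.eq, he.one_sub.eq, he.mul_one_sub_self,
      he.one_sub_mul_self, smul_zero, add_zero, zero_add, pow_succ]

section PartialTranspose

variable {A B : Type*}

@[simp]
theorem partialTransposeA_add (X Y : Matrix (A × B) (A × B) ℂ) :
    partialTransposeA (X + Y) = partialTransposeA X + partialTransposeA Y :=
  rfl

@[simp]
theorem partialTransposeA_sub (X Y : Matrix (A × B) (A × B) ℂ) :
    partialTransposeA (X - Y) = partialTransposeA X - partialTransposeA Y :=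
  rfl

@[simp]
theorem partialTransposeA_smul (c : ℂ) (X : Matrix (A × B) (A × B) ℂ) :
    partialTransposeA (c • X) = c • partialTransposeA X :=
  rfl

@[simp]
theorem partialTransposeA_one [DecidableEq A] [DecidableEq B] :
    partialTransposeA (1 : Matrix (A × B) (A × B) ℂ) = 1 := by
  ext ⟨a, b⟩ ⟨a', b'⟩
  simp only [partialTransposeA, Matrix.one_apply, Prod.mk.injEq]
  grind

end PartialTranspose

section MaxEntProj

variable {d : ℕ}

theorem partialTransposeA_swapMatrix (hd : d ≠ 0) :
    partialTransposeA (swapMatrix d) = (d : ℂ) • maxEntProj d := by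
  ext ⟨i, j⟩ ⟨k, l⟩
  simp only [partialTransposeA, swapMatrix, maxEntProj, Matrix.smul_apply, smul_eq_mul]
  rw [mul_div_cancel₀ _ (Nat.cast_ne_zero.mpr hd)]
  grind

theorem isIdempotentElem_maxEntProj (hd : d ≠ 0) : IsIdempotentElem (maxEntProj d) := by
  have hd' : (d : ℂ) ≠ 0 := Nat.cast_ne_zero.mpr hd
  ext ⟨i, j⟩ ⟨k, l⟩
  simp only [Matrix.mul_apply, maxEntProj, Fintype.sum_prod_type]
  by_cases hij : i = j <;> by_cases hkl : k = l <;>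
    simp [hij, hkl, ite_div, Finset.sum_ite_eq]
  field_simp

theorem trace_maxEntProj (hd : d ≠ 0) : (maxEntProj d).trace = 1 := by
  simp only [Matrix.trace, Matrix.diag, maxEntProj, Fintype.sum_prod_type]
  simp [ite_div, Finset.sum_ite_eq, Nat.cast_ne_zero.mpr hd]

end MaxEntProj

theorem partialTransposeA_wernerState {d : ℕ} (hd : 2 ≤ d) (α : ℝ) :
    partialTransposeA (wernerState d α) =
      ((2 * (α : ℂ) - 1) / d) • maxEntProj d +
        (((d : ℂ) + 1 - 2 * α) / (d * ((d : ℂ) ^ 2 - 1))) • (1 - maxEntProj d) := by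
  have hd₀ : (d : ℂ) ≠ 0 := Nat.cast_ne_zero.mpr (by omega)
  have hd₁ : (d : ℂ) - 1 ≠ 0 := sub_ne_zero.mpr (by exact_mod_cast (by omega : d ≠ 1))
  have hd₂ : (d : ℂ) + 1 ≠ 0 := by exact_mod_cast (by omega : d + 1 ≠ 0)
  have hd₃ : (d : ℂ) ^ 2 - 1 ≠ 0 := by
    rw [show (d : ℂ) ^ 2 - 1 = (d - 1) * (d + 1) by ring]
    exact mul_ne_zero hd₁ hd₂
  simp only [wernerState, symProj, antisymProj, partialTransposeA_add, partialTransposeA_sub,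
    partialTransposeA_smul, partialTransposeA_one, partialTransposeA_swapMatrix (by omega : d ≠ 0)]
  match_scalars <;> field_simp <;> ring

theorem wernerState_PT_moments_general (d : ℕ) (hd : 2 ≤ d) (α : ℝ) (n : ℕ) :
    ((partialTransposeA (wernerState d α)) ^ n).trace =
      ((((2 * α - 1) / d) ^ n +
        ((d : ℝ) ^ 2 - 1) * (((d : ℝ) + 1 - 2 * α) / (d * ((d : ℝ) ^ 2 - 1))) ^ n : ℝ) : ℂ) := by
  have hd₀ : d ≠ 0 := by omega
  rw [partialTransposeA_wernerState hd,
    (isIdempotentElem_maxEntProj hd₀).smul_add_smul_one_sub_pow]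
  simp only [Matrix.trace_add, Matrix.trace_smul, Matrix.trace_sub, Matrix.trace_one,
    trace_maxEntProj hd₀, Fintype.card_prod, Fintype.card_fin, smul_eq_mul]
  push_cast
  ring

/-- **PT-moments of the Werner state.**
For `d ≥ 2`, `α ∈ [0,1]` and `n ≥ 1`,
`Tr[(ρ_W^{T_A})^n] = λ₀^n + (d²−1)·λ₁^n` with `λ₀ = (2α−1)/d` and
`λ₁ = (d+1−2α)/(d(d²−1))`. -/
theorem wernerState_PT_moments (d : ℕ) (hd : 2 ≤ d) (α : ℝ)
    (hα : α ∈ Set.Icc (0 : ℝ) 1) (n : ℕ) (hn : 1 ≤ n) :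
    ((partialTransposeA (wernerState d α)) ^ n).trace =
      ((((2 * α - 1) / d) ^ n +
        ((d : ℝ) ^ 2 - 1) * (((d : ℝ) + 1 - 2 * α) / (d * ((d : ℝ) ^ 2 - 1))) ^ n : ℝ) : ℂ) :=
  wernerState_PT_moments_general d hd α n
end
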